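/- Fix a column x₀ and a row y₀, and for j, k ∈ {0,1} define the four states Φ_{jk} = (V_{Δ_{x₀}})^j (V_{Γ̃_{y₀}})^k Φ. Then for all j, k ∈ {0,1}: Φ_{jk} ≠ 0; W_{Γ^h_y} Φ_{jk} = (−1)^j Φ_{jk} for every row y; and W_{Γ_x} Φ_{jk} = (−1)^k Φ_{jk} for every column x. In particular the four states Φ_{jk} are pairwise orthogonal. -/

import Mathlib

open Finset

noncomputable section

/-- The Hilbert space of qubits at the elements of `ι`. -/
abbrev QubitSpace (ι : Type*) := (ι → ZMod 2) → ℂ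

/-- Indicator function of a finset, valued in `ZMod 2`. -/
def indicZ2 {ι : Type*} [DecidableEq ι] (S : Finset ι) : ι → ZMod 2 :=
  fun b => if b ∈ S then 1 else 0

/-- The Z-type operator `W_S`. -/
def Wop {ι : Type*} [DecidableEq ι] (S : Finset ι) :
    Module.End ℂ (QubitSpace ι) where
  toFun ψ := fun σ => (-1 : ℂ) ^ (∑ b ∈ S, σ b).val * ψ σ
  map_add' ψ φ := by funext σ; simp [mul_add]
  map_smul' c ψ := by funext σ; simp; ring

/-- The X-type operator `V_S`. -/
def Vop {ι : Type*} [DecidableEq ι] (S : Finset ι) :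
    Module.End ℂ (QubitSpace ι) where
  toFun ψ := fun σ => ψ (σ + indicZ2 S)
  map_add' _ _ := rfl
  map_smul' _ _ := rfl

/-- The inner product `⟨ψ, φ⟩ = ∑_σ conj (ψ σ) · φ σ`. -/
def qInner {ι : Type*} [Fintype ι] [DecidableEq ι] (ψ φ : QubitSpace ι) : ℂ :=
  ∑ σ, (starRingEnd ℂ) (ψ σ) * φ σ

/-- Square root of an involution: `W^{1/2} = (1/2)(1+W) + (i/2)(1−W)`. -/
def sqrtInv {E : Type*} [AddCommGroup E] [Module ℂ E] (W : Module.End ℂ E) :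
    Module.End ℂ E :=
  ((2 : ℂ)⁻¹) • (1 + W) + (Complex.I * (2 : ℂ)⁻¹) • (1 - W)

/-- `W^{a/2}` for `a ∈ {0,1}`: the identity if `a = 0`, `W^{1/2}` if `a = 1`. -/
def halfPow {E : Type*} [AddCommGroup E] [Module ℂ E] (W : Module.End ℂ E)
    (a : ℕ) : Module.End ℂ E :=
  if a = 0 then 1 else sqrtInv W

/-- The post-strategy state `ψ' = (∏_j W_{Γ_j}^{a_j/2}) ψ` (the factors are
commuting diagonal operators, so the order of the product is immaterial). -/
def postState {ι : Type*} [DecidableEq ι] {T : ℕ} (Γ : Fin T → Finset ι)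
    (a : Fin T → ℕ) (ψ : QubitSpace ι) : QubitSpace ι :=
  ((List.ofFn fun j => halfPow (Wop (Γ j)) (a j)).prod) ψ

/-- The X-basis vector `χ_y(σ) = 2^{−|ι|/2} (−1)^{∑_b σ(b)·y(b)}`. -/
def chi {ι : Type*} [Fintype ι] (y : ι → ZMod 2) : QubitSpace ι :=
  fun σ => (((Real.sqrt 2 ^ Fintype.card ι)⁻¹ : ℝ) : ℂ) *
    (-1 : ℂ) ^ (∑ b, (σ b).val * (y b).val)

/-- `r = ((∑_j a_j)/2) mod 2 ∈ ZMod 2`. -/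
def rOf {T : ℕ} (a : Fin T → ℕ) : ZMod 2 := (((∑ j, a j) / 2 : ℕ) : ZMod 2)

/-- The winning probability on input `a`:
`p(ψ, a) = ∑_{y : ∑_{b ∈ Γ̃} y b = r} |⟨χ_y, ψ'⟩|²`. -/
def winProb {ι : Type*} [Fintype ι] [DecidableEq ι] {T : ℕ}
    (Γ : Fin T → Finset ι) (Γt : Finset ι) (a : Fin T → ℕ)
    (ψ : QubitSpace ι) : ℝ :=
  ∑ y ∈ univ.filter (fun y : ι → ZMod 2 => ∑ b ∈ Γt, y b = rOf a),
    ‖qInner (chi y) (postState Γ a ψ)‖ ^ 2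

/-- The quantum winning probability: the average of `p(ψ, a)` over the
`2^{T−1}` valid inputs `a` (those with `∑_j a_j` even). -/
def quantumWinProb {ι : Type*} [Fintype ι] [DecidableEq ι] {T : ℕ}
    (Γ : Fin T → Finset ι) (Γt : Finset ι) (ψ : QubitSpace ι) : ℝ :=
  (∑ a ∈ univ.filter (fun a : Fin T → Fin 2 => Even (∑ j, (a j : ℕ))),
      winProb Γ Γt (fun j => (a j : ℕ)) ψ) / 2 ^ (T - 1)

/-- The computational basis vector `δ_σ`. -/
def deltaVec {ι : Type*} [DecidableEq (ι → ZMod 2)] (σ : ι → ZMod 2) :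
    QubitSpace ι :=
  fun τ => if τ = σ then 1 else 0

/-! ### The square lattice on the torus -/

variable (Lx Ly : ℕ)

/-- Vertices of the `L_x × L_y` square lattice on the torus. -/
abbrev Vertex := ZMod Lx × ZMod Ly

/-- Bonds of the lattice: `((x,y), 0)` is the horizontal bond from `(x,y)` to
`(x+1,y)`, and `((x,y), 1)` the vertical bond from `(x,y)` to `(x,y+1)`. -/
abbrev Bond := (ZMod Lx × ZMod Ly) × Fin 2

variable [NeZero Lx] [NeZero Ly]

/-- The vertical Wilson loop `Γ_x = {((x,y),1) : y}`. -/
def gammaV (x : ZMod Lx) : Finset (Bond Lx Ly) :=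
  univ.filter (fun b => b.1.1 = x ∧ b.2 = 1)

/-- The horizontal Wilson loop `Γ^h_y = {((x,y),0) : x}`. -/
def gammaH (y : ZMod Ly) : Finset (Bond Lx Ly) :=
  univ.filter (fun b => b.1.2 = y ∧ b.2 = 0)

/-- The horizontal dual loop `Γ̃_y = {((x,y),1) : x}`. -/
def dualH (y : ZMod Ly) : Finset (Bond Lx Ly) :=
  univ.filter (fun b => b.1.2 = y ∧ b.2 = 1)

/-- The vertical dual loop `Δ_x = {((x,y),0) : y}`. -/
def dualV (x : ZMod Lx) : Finset (Bond Lx Ly) :=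
  univ.filter (fun b => b.1.1 = x ∧ b.2 = 0)

/-- The plaquette `P(x,y) = {((x,y),0), ((x,y),1), ((x,y+1),0), ((x+1,y),1)}`. -/
def plaqSet (v : Vertex Lx Ly) : Finset (Bond Lx Ly) :=
  {(v, 0), (v, 1), ((v.1, v.2 + 1), 0), ((v.1 + 1, v.2), 1)}

/-- The star `S(x,y) = {((x,y),0), ((x,y),1), ((x−1,y),0), ((x,y−1),1)}`. -/
def starSet (v : Vertex Lx Ly) : Finset (Bond Lx Ly) :=
  {(v, 0), (v, 1), ((v.1 - 1, v.2), 0), ((v.1, v.2 - 1), 1)}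

/-- The plaquette operator `A_{(x,y)} = W_{P(x,y)}`. -/
def Aop (v : Vertex Lx Ly) : Module.End ℂ (QubitSpace (Bond Lx Ly)) :=
  Wop (plaqSet Lx Ly v)

/-- The star operator `B_{(x,y)} = V_{S(x,y)}`. -/
def Bop (v : Vertex Lx Ly) : Module.End ℂ (QubitSpace (Bond Lx Ly)) :=
  Vop (starSet Lx Ly v)

/-- The basis vector at the all-zeros configuration. -/
def delta0 : QubitSpace (Bond Lx Ly) := fun σ => if σ = 0 then 1 else 0

/-- The star projector `(1/2)(1 + B_v)`. -/
def starProj (v : Vertex Lx Ly) : Module.End ℂ (QubitSpace (Bond Lx Ly)) :=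
  ((2 : ℂ)⁻¹) • (1 + Bop Lx Ly v)

lemma vop_commute {ι : Type*} [DecidableEq ι] (S T : Finset ι) :
    Commute (Vop S) (Vop T) := by
  apply LinearMap.ext; intro ψ; funext σ
  simp only [Module.End.mul_apply]
  show ψ (σ + indicZ2 S + indicZ2 T) = ψ (σ + indicZ2 T + indicZ2 S)
  rw [add_right_comm]

lemma starProj_commute (v w : Vertex Lx Ly) :
    Commute (starProj Lx Ly v) (starProj Lx Ly w) := by
  have h : Commute (Bop Lx Ly v) (Bop Lx Ly w) := vop_commute _ _
  have h1 : Commute (1 + Bop Lx Ly v) (1 + Bop Lx Ly w) :=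
    (Commute.one_left _).add_left (((Commute.one_right _).add_right h))
  exact (h1.smul_left _).smul_right _

/-- The (unnormalized) zero-flux ground state
`Φ = (∏_v (1/2)(1 + B_v)) δ₀` (the star projectors commute, so the product
is well-defined). -/
def Phi : QubitSpace (Bond Lx Ly) :=
  (Finset.univ.noncommProd (fun v : Vertex Lx Ly => starProj Lx Ly v)
    (fun v _ w _ _ => starProj_commute Lx Ly v w)) (delta0 Lx Ly)

/-- The norm induced by the inner product. -/
def qNorm {ι : Type*} [Fintype ι] [DecidableEq ι] (ψ : QubitSpace ι) : ℝ :=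
  Real.sqrt (qInner ψ ψ).re

/-! Every Wilson loop meets every star in an even number of bonds, so it commutes with the star
projectors and fixes `δ₀`; hence it fixes `Φ`. A dual loop meets a Wilson loop of the other
orientation in exactly one bond and one of the same orientation in none, so `V_{Δ_{x₀}}` flips
the sign of every `W_{Γ^h_y}` and commutes with every `W_{Γ_x}`, and symmetrically for
`V_{Γ̃_{y₀}}`. The states `Φ_{jk}` are nonzero because `Φ` has nonnegative entries and a
positive entry at `0`, and the `V_T` are invertible. Orthogonality follows since the `W_S` are
unitary and the four states have distinct pairs of eigenvalues. -/

open scoped ComplexOrder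

section Operators

variable {ι : Type*} [DecidableEq ι]

lemma neg_one_pow_val_add (a b : ZMod 2) :
    (-1 : ℂ) ^ (a + b).val = (-1) ^ a.val * (-1) ^ b.val := by
  rw [ZMod.val_add, ← neg_one_pow_eq_pow_mod_two, pow_add]

lemma neg_one_pow_val_natCast (n : ℕ) : (-1 : ℂ) ^ (n : ZMod 2).val = (-1) ^ n := by
  rw [ZMod.val_natCast, ← neg_one_pow_eq_pow_mod_two]

lemma sum_indicZ2 (S T : Finset ι) : ∑ b ∈ S, indicZ2 T b = (#(S ∩ T) : ZMod 2) := by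
  simp [indicZ2, Finset.sum_ite_mem]

@[simp]
lemma Wop_apply (S : Finset ι) (ψ : QubitSpace ι) (σ : ι → ZMod 2) :
    Wop S ψ σ = (-1 : ℂ) ^ (∑ b ∈ S, σ b).val * ψ σ := rfl

@[simp]
lemma Vop_apply (S : Finset ι) (ψ : QubitSpace ι) (σ : ι → ZMod 2) :
    Vop S ψ σ = ψ (σ + indicZ2 S) := rfl

lemma Wop_Vop (S T : Finset ι) (ψ : QubitSpace ι) :
    Wop S (Vop T ψ) = (-1 : ℂ) ^ #(S ∩ T) • Vop T (Wop S ψ) := by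
  funext σ
  have hsq : (-1 : ℂ) ^ #(S ∩ T) * (-1) ^ #(S ∩ T) = 1 := by
    rw [← pow_add, Even.neg_one_pow ⟨_, rfl⟩]
  simp only [Wop_apply, Vop_apply, Pi.smul_apply, smul_eq_mul, Pi.add_apply, sum_add_distrib,
    sum_indicZ2, neg_one_pow_val_add, neg_one_pow_val_natCast]
  linear_combination -(-1 : ℂ) ^ (∑ b ∈ S, σ b).val * ψ (σ + indicZ2 T) * hsq

lemma commute_Wop_Vop_of_even {S T : Finset ι} (h : Even #(S ∩ T)) :
    Commute (Wop S) (Vop T) :=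
  LinearMap.ext fun ψ => by
    simp [Module.End.mul_apply, Wop_Vop, h.neg_one_pow]

lemma Wop_Vop_pow_of_eq_smul {S : Finset ι} {ψ : QubitSpace ι} {c : ℂ}
    (hψ : Wop S ψ = c • ψ) (T : Finset ι) (n : ℕ) :
    Wop S ((Vop T ^ n) ψ) = ((-1 : ℂ) ^ (#(S ∩ T) * n) * c) • (Vop T ^ n) ψ := by
  induction n with
  | zero => simpa using hψ
  | succ n ih =>
    rw [pow_succ', Module.End.mul_apply, Wop_Vop, ih, map_smul, smul_smul]
    ring_nf

lemma Vop_involutive (T : Finset ι) : Function.Involutive (Vop T) := by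
  intro ψ
  funext σ
  simp [add_assoc, ZModModule.add_self]

lemma Vop_pow_apply_ne_zero (T : Finset ι) (n : ℕ) {ψ : QubitSpace ι} (hψ : ψ ≠ 0) :
    (Vop T ^ n) ψ ≠ 0 := by
  rw [Ne, ← map_zero (Vop T ^ n), Module.End.coe_pow,
    ((Vop_involutive T).injective.iterate n).eq_iff]
  exact hψ

variable [Fintype ι]

lemma qInner_smul_smul (c d : ℂ) (ψ φ : QubitSpace ι) :
    qInner (c • ψ) (d • φ) = starRingEnd ℂ c * d * qInner ψ φ := by
  simp only [qInner, mul_sum, Pi.smul_apply, smul_eq_mul, map_mul]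
  exact sum_congr rfl fun σ _ => by ring

lemma qInner_Wop_Wop (S : Finset ι) (ψ φ : QubitSpace ι) :
    qInner (Wop S ψ) (Wop S φ) = qInner ψ φ := by
  refine sum_congr rfl fun σ _ => ?_
  have hsq : (-1 : ℂ) ^ (∑ b ∈ S, σ b).val * (-1) ^ (∑ b ∈ S, σ b).val = 1 := by
    rw [← pow_add, Even.neg_one_pow ⟨_, rfl⟩]
  simp only [Wop_apply, map_mul, map_pow, map_neg, map_one]
  linear_combination (starRingEnd ℂ) (ψ σ) * φ σ * hsq

lemma qInner_eq_zero_of_Wop_eq_smul {S : Finset ι} {ψ φ : QubitSpace ι} {c d : ℂ}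
    (hψ : Wop S ψ = c • ψ) (hφ : Wop S φ = d • φ) (hcd : starRingEnd ℂ c * d ≠ 1) :
    qInner ψ φ = 0 := by
  have h : qInner ψ φ = starRingEnd ℂ c * d * qInner ψ φ := by
    rw [← qInner_smul_smul, ← hψ, ← hφ, qInner_Wop_Wop]
  have : (1 - starRingEnd ℂ c * d) * qInner ψ φ = 0 := by linear_combination h
  exact (mul_eq_zero.mp this).resolve_left (sub_ne_zero.mpr hcd.symm)

end Operators

section Positivity

variable {ι : Type*}

-- Under `ComplexOrder`, `0 ≤ ψ` says that every entry of `ψ` is a nonnegative real.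
def IsPositiveState (ψ : QubitSpace ι) : Prop := 0 ≤ ψ ∧ 0 < ψ 0

lemma IsPositiveState.half_one_add_Vop_apply [DecidableEq ι] {ψ : QubitSpace ι}
    (hψ : IsPositiveState ψ) (T : Finset ι) :
    IsPositiveState (((2 : ℂ)⁻¹ • (1 + Vop T)) ψ) := by
  have half : (0 : ℂ) < 2⁻¹ := by norm_num
  exact ⟨fun σ => mul_nonneg half.le (add_nonneg (hψ.1 σ) (hψ.1 _)),
    mul_pos half (add_pos_of_pos_of_nonneg hψ.2 (hψ.1 _))⟩

lemma IsPositiveState.ne_zero {ψ : QubitSpace ι} (hψ : IsPositiveState ψ) : ψ ≠ 0 := by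
  rintro rfl
  exact lt_irrefl _ hψ.2

end Positivity

section Lattice

variable {Lx Ly : ℕ} [NeZero Lx] [NeZero Ly]

lemma isPositiveState_delta0 : IsPositiveState (delta0 Lx Ly) := by
  refine ⟨fun σ => ?_, by simp [delta0]⟩
  unfold delta0
  split_ifs <;> simp

lemma isPositiveState_Phi : IsPositiveState (Phi Lx Ly) := by
  have key : ∀ ψ, IsPositiveState ψ → IsPositiveState
      ((univ.noncommProd (fun v => starProj Lx Ly v)
        (fun v _ w _ _ => starProj_commute Lx Ly v w)) ψ) :=
    Finset.noncommProd_induction _ _ _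
      (fun A : Module.End ℂ (QubitSpace (Bond Lx Ly)) =>
        ∀ ψ, IsPositiveState ψ → IsPositiveState (A ψ))
      (fun _ _ hA hB ψ hψ => hA _ (hB ψ hψ)) (fun _ hψ => hψ)
      (fun _ _ _ hψ => hψ.half_one_add_Vop_apply _)
  exact key _ isPositiveState_delta0

lemma Wop_delta0 (S : Finset (Bond Lx Ly)) : Wop S (delta0 Lx Ly) = delta0 Lx Ly := by
  funext σ
  by_cases hσ : σ = 0 <;> simp [delta0, hσ]

lemma Wop_Phi_of_even {S : Finset (Bond Lx Ly)} (h : ∀ v, Even #(S ∩ starSet Lx Ly v)) :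
    Wop S (Phi Lx Ly) = Phi Lx Ly := by
  have hcomm := univ.noncommProd_commute (fun v => starProj Lx Ly v)
    (fun v _ w _ _ => starProj_commute Lx Ly v w) (Wop S) fun v _ =>
      ((Commute.one_right _).add_right (commute_Wop_Vop_of_even (h v))).smul_right _
  rw [Phi, ← Module.End.mul_apply, hcomm, Module.End.mul_apply, Wop_delta0]

lemma card_gammaH_inter_dualV (y : ZMod Ly) (x : ZMod Lx) :
    #(gammaH Lx Ly y ∩ dualV Lx Ly x) = 1 := by
  rw [card_eq_one]
  exact ⟨((x, y), 0), by ext; simp [gammaH, dualV, Prod.ext_iff]; tauto⟩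

lemma card_gammaH_inter_dualH (y y' : ZMod Ly) : #(gammaH Lx Ly y ∩ dualH Lx Ly y') = 0 := by
  rw [card_eq_zero, ← disjoint_iff_inter_eq_empty, gammaH, dualH, disjoint_filter]
  simp +contextual

lemma even_card_gammaH_inter_starSet (hLx : 2 ≤ Lx) (y : ZMod Ly) (v : Vertex Lx Ly) :
    Even #(gammaH Lx Ly y ∩ starSet Lx Ly v) := by
  have : Fact (1 < Lx) := ⟨hLx⟩
  have hne : v.1 ≠ v.1 - 1 := fun h => one_ne_zero (sub_eq_self.mp h.symm)
  rw [gammaH, filter_inter, univ_inter, starSet]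
  by_cases hy : v.2 = y
  · simp [filter_insert, filter_singleton, hy, Prod.ext_iff, hne]
  · simp [filter_insert, filter_singleton, hy]

lemma card_gammaV_inter_dualH (x : ZMod Lx) (y : ZMod Ly) :
    #(gammaV Lx Ly x ∩ dualH Lx Ly y) = 1 := by
  rw [card_eq_one]
  exact ⟨((x, y), 1), by ext; simp [gammaV, dualH, Prod.ext_iff]; tauto⟩

lemma card_gammaV_inter_dualV (x x' : ZMod Lx) : #(gammaV Lx Ly x ∩ dualV Lx Ly x') = 0 := by
  rw [card_eq_zero, ← disjoint_iff_inter_eq_empty, gammaV, dualV, disjoint_filter]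
  simp +contextual

lemma even_card_gammaV_inter_starSet (hLy : 2 ≤ Ly) (x : ZMod Lx) (v : Vertex Lx Ly) :
    Even #(gammaV Lx Ly x ∩ starSet Lx Ly v) := by
  have : Fact (1 < Ly) := ⟨hLy⟩
  have hne : v.2 ≠ v.2 - 1 := fun h => one_ne_zero (sub_eq_self.mp h.symm)
  rw [gammaV, filter_inter, univ_inter, starSet]
  by_cases hx : v.1 = x
  · simp [filter_insert, filter_singleton, hx, Prod.ext_iff, hne]
  · simp [filter_insert, filter_singleton, hx]

end Lattice

lemma conj_neg_one_pow_mul_neg_one_pow_ne_one {a b : Fin 2} (h : a ≠ b) :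
    starRingEnd ℂ ((-1) ^ (a : ℕ)) * (-1) ^ (b : ℕ) ≠ 1 := by
  fin_cases a <;> fin_cases b <;> simp at h ⊢ <;> norm_num

/-- the four states `Φ_{jk} = (V_{Δ_{x₀}})^j (V_{Γ̃_{y₀}})^k Φ`
(`j, k ∈ {0,1}`) are nonzero, satisfy `W_{Γ^h_y} Φ_{jk} = (−1)^j Φ_{jk}` for
every row `y` and `W_{Γ_x} Φ_{jk} = (−1)^k Φ_{jk}` for every column `x`, and in
particular are pairwise orthogonal. -/
theorem topological_sectors (Lx Ly : ℕ) [NeZero Lx] [NeZero Ly]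
    (hLx : 2 ≤ Lx) (hLy : 2 ≤ Ly) (x₀ : ZMod Lx) (y₀ : ZMod Ly) :
    let Φjk : Fin 2 → Fin 2 → QubitSpace (Bond Lx Ly) := fun j k =>
      ((Vop (dualV Lx Ly x₀)) ^ (j : ℕ))
        (((Vop (dualH Lx Ly y₀)) ^ (k : ℕ)) (Phi Lx Ly))
    (∀ j k : Fin 2, Φjk j k ≠ 0) ∧
      (∀ (j k : Fin 2) (y : ZMod Ly),
        Wop (gammaH Lx Ly y) (Φjk j k) = ((-1 : ℂ) ^ (j : ℕ)) • Φjk j k) ∧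
      (∀ (j k : Fin 2) (x : ZMod Lx),
        Wop (gammaV Lx Ly x) (Φjk j k) = ((-1 : ℂ) ^ (k : ℕ)) • Φjk j k) ∧
      (∀ j k j' k' : Fin 2, (j, k) ≠ (j', k') →
        qInner (Φjk j k) (Φjk j' k') = 0) := by
  intro Φjk
  have hH (j k : Fin 2) (y : ZMod Ly) :
      Wop (gammaH Lx Ly y) (Φjk j k) = ((-1 : ℂ) ^ (j : ℕ)) • Φjk j k := by
    have hΦ : Wop (gammaH Lx Ly y) (Phi Lx Ly) = (1 : ℂ) • Phi Lx Ly := by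
      rw [one_smul, Wop_Phi_of_even (even_card_gammaH_inter_starSet hLx y)]
    simpa [card_gammaH_inter_dualV, card_gammaH_inter_dualH] using
      Wop_Vop_pow_of_eq_smul (Wop_Vop_pow_of_eq_smul hΦ (dualH Lx Ly y₀) k) (dualV Lx Ly x₀) j
  have hV (j k : Fin 2) (x : ZMod Lx) :
      Wop (gammaV Lx Ly x) (Φjk j k) = ((-1 : ℂ) ^ (k : ℕ)) • Φjk j k := by
    have hΦ : Wop (gammaV Lx Ly x) (Phi Lx Ly) = (1 : ℂ) • Phi Lx Ly := by
      rw [one_smul, Wop_Phi_of_even (even_card_gammaV_inter_starSet hLy x)]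
    simpa [card_gammaV_inter_dualV, card_gammaV_inter_dualH] using
      Wop_Vop_pow_of_eq_smul (Wop_Vop_pow_of_eq_smul hΦ (dualH Lx Ly y₀) k) (dualV Lx Ly x₀) j
  refine ⟨fun j k => Vop_pow_apply_ne_zero _ _ (Vop_pow_apply_ne_zero _ _
    isPositiveState_Phi.ne_zero), hH, hV, fun j k j' k' hne => ?_⟩
  rcases not_and_or.mp (hne ∘ Prod.ext_iff.mpr) with hj | hk
  · exact qInner_eq_zero_of_Wop_eq_smul (hH j k 0) (hH j' k' 0)
      (conj_neg_one_pow_mul_neg_one_pow_ne_one hj)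
  · exact qInner_eq_zero_of_Wop_eq_smul (hV j k 0) (hV j' k' 0)
      (conj_neg_one_pow_mul_neg_one_pow_ne_one hk)
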